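/- arXiv:2209.14496 — 7 statements merged into one kernel-verified Lean document; each statement's English description precedes it below -/
import Mathlib

section
/- Let T be a triangulated category and let C1, C2 be strictly full triangulated subcategories of T such that Hom_T(X, Y) = 0 for every object X of C2 and every object Y of C1. If the smallest strictly full triangulated subcategory of T containing both C1 and C2 is all of T, then for every object D of T there exists a distinguished triangle B ⟶ D ⟶ A ⟶ B⟦1⟧ with B an object of C2 and A an object of C1. -/
/-! Write `P ∗ Q` for `extensionProduct P Q`, the objects `D` sitting in a distinguished
triangle `Y ⟶ D ⟶ Z ⟶ Y⟦1⟧` with `Y ∈ P`, `Z ∈ Q`. Since `C₂ ∗ C₁` contains `C₁` and `C₂`,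
it suffices that it is a triangulated subcategory, and only closure under extensions needs
an idea. Associativity of `∗` (the octahedral axiom) gives
`(C₂ ∗ C₁) ∗ (C₂ ∗ C₁) = C₂ ∗ (C₁ ∗ C₂) ∗ C₁`. In a triangle `A ⟶ D ⟶ B ⟶ A⟦1⟧` with
`A ∈ C₁`, `B ∈ C₂` the connecting morphism vanishes by orthogonality, so `D ≅ A ⊞ B` and
`C₁ ∗ C₂ ≤ C₂ ∗ C₁`; finally `C₂ ∗ C₂ ≤ C₂` and `C₁ ∗ C₁ ≤ C₁`. -/

open CategoryTheory Category Limits Pretriangulated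

universe v u

variable (T : Type u) [Category.{v} T] [HasZeroObject T] [HasShift T ℤ]
  [Preadditive T] [∀ n : ℤ, (shiftFunctor T n).Additive] [Pretriangulated T]

/-- A strictly full triangulated subcategory of `T`, encoded as a predicate on objects:
it contains the zero objects, is closed under isomorphisms, is closed under shifts in
both directions, and is closed under extensions. -/
structure IsTriangulatedSubcategory (P : T → Prop) : Prop where
  zero : ∀ X : T, IsZero X → P X
  isoClosed : ∀ ⦃X Y : T⦄, (X ≅ Y) → P X → P Y
  shift : ∀ (X : T) (n : ℤ), P X → P (X⟦n⟧)
  ext₂ : ∀ Tr : Triangle T, (Tr ∈ distTriang T) → P Tr.obj₁ → P Tr.obj₃ → P Tr.obj₂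

/-- The smallest strictly full triangulated subcategory of `T` containing the class `S`:
an object lies in it iff it lies in every strictly full triangulated subcategory
containing `S`. -/
def smallestTriangulatedContaining (S : T → Prop) : T → Prop :=
  fun X => ∀ P : T → Prop, IsTriangulatedSubcategory T P → (∀ Y, S Y → P Y) → P X

open ObjectProperty ZeroObject

namespace IsTriangulatedSubcategory

variable {T} {P : T → Prop} (hP : IsTriangulatedSubcategory T P)
include hP

lemma containsZero : ContainsZero P :=
  ⟨⟨0, isZero_zero T, hP.zero _ (isZero_zero T)⟩⟩

lemma extensionProduct_self_le : extensionProduct P P ≤ P :=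
  fun _ ⟨_, _, _, _, _, hTr, h₁, h₃⟩ => hP.ext₂ _ hTr h₁ h₃

end IsTriangulatedSubcategory

section

variable {T} {C1 C2 : T → Prop}

lemma extensionProduct_shift (hC1 : IsTriangulatedSubcategory T C1)
    (hC2 : IsTriangulatedSubcategory T C2) {X : T} (hX : extensionProduct C2 C1 X) (n : ℤ) :
    extensionProduct C2 C1 (X⟦n⟧) := by
  obtain ⟨B, A, f, g, h, hTr, hB, hA⟩ := hX
  exact ⟨_, _, _, _, _, Triangle.shift_distinguished _ hTr n, hC2.shift B n hB, hC1.shift A n hA⟩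

lemma extensionProduct_le_extensionProduct_swap (hC1 : IsTriangulatedSubcategory T C1)
    (hHom : ∀ (X Y : T), C2 X → C1 Y → ∀ f : X ⟶ Y, f = 0) :
    extensionProduct C1 C2 ≤ extensionProduct C2 C1 := by
  rintro X ⟨A, B, f, g, h, hTr, hA, hB⟩
  obtain ⟨e, -, -⟩ := exists_iso_binaryBiproduct_of_distTriang _ hTr
    (hHom _ _ hB (hC1.shift A 1 hA) h)
  exact prop_of_iso _ (biprod.braiding B A ≪≫ e.symm)
    ⟨B, A, _, _, _, binaryBiproductTriangle_distinguished B A, hB, hA⟩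

lemma extensionProduct_extensionProduct_le [IsTriangulated T]
    (hC1 : IsTriangulatedSubcategory T C1) (hC2 : IsTriangulatedSubcategory T C2)
    (hHom : ∀ (X Y : T), C2 X → C1 Y → ∀ f : X ⟶ Y, f = 0) :
    extensionProduct (extensionProduct C2 C1) (extensionProduct C2 C1) ≤
      extensionProduct C2 C1 :=
  calc _ = extensionProduct C2 (extensionProduct (extensionProduct C1 C2) C1) := by
        simp only [extensionProduct_assoc]
    _ ≤ extensionProduct C2 (extensionProduct (extensionProduct C2 C1) C1) :=
        monotone_extensionProduct_right _ <| monotone_extensionProduct_left _ <|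
          extensionProduct_le_extensionProduct_swap hC1 hHom
    _ = extensionProduct (extensionProduct C2 C2) (extensionProduct C1 C1) := by
        simp only [extensionProduct_assoc]
    _ ≤ extensionProduct C2 C1 :=
        (monotone_extensionProduct_left _ hC2.extensionProduct_self_le).trans <|
          monotone_extensionProduct_right _ hC1.extensionProduct_self_le

lemma isTriangulatedSubcategory_extensionProduct [IsTriangulated T]
    (hC1 : IsTriangulatedSubcategory T C1) (hC2 : IsTriangulatedSubcategory T C2)
    (hHom : ∀ (X Y : T), C2 X → C1 Y → ∀ f : X ⟶ Y, f = 0) :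
    IsTriangulatedSubcategory T (extensionProduct C2 C1) where
  zero X hX := ⟨X, 0, _, _, _, contractible_distinguished X, hC2.zero X hX,
    hC1.zero _ (isZero_zero T)⟩
  isoClosed _ _ e hX := prop_of_iso _ e hX
  shift _ n hX := extensionProduct_shift hC1 hC2 hX n
  ext₂ _ hTr h₁ h₃ :=
    extensionProduct_extensionProduct_le hC1 hC2 hHom _ ⟨_, _, _, _, _, hTr, h₁, h₃⟩

end

/-- If `C₁`, `C₂` are strictly full triangulated subcategories with no nonzero morphisms
from `C₂` to `C₁` which together generate `T` as a triangulated category, then every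
object of `T` fits into a distinguished triangle `B ⟶ D ⟶ A ⟶ B⟦1⟧` with `B ∈ C₂` and
`A ∈ C₁`. -/
theorem generation_gives_decomposition_triangles [IsTriangulated T]
    (C1 C2 : T → Prop)
    (hC1 : IsTriangulatedSubcategory T C1) (hC2 : IsTriangulatedSubcategory T C2)
    (hHom : ∀ (X Y : T), C2 X → C1 Y → ∀ f : X ⟶ Y, f = 0)
    (hgen : ∀ D : T, smallestTriangulatedContaining T (fun Z => C1 Z ∨ C2 Z) D) :
    ∀ D : T, ∃ (B A : T) (f : B ⟶ D) (g : D ⟶ A) (h : A ⟶ B⟦(1 : ℤ)⟧),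
      C2 B ∧ C1 A ∧ (Triangle.mk f g h ∈ distTriang T) := by
  intro D
  have := hC1.containsZero
  have := hC2.containsZero
  obtain ⟨B, A, f, g, h, hTr, hB, hA⟩ :=
    hgen D _ (isTriangulatedSubcategory_extensionProduct hC1 hC2 hHom) fun Y hY =>
      hY.elim (le_extensionProduct_right C2 Y) (le_extensionProduct_left C1 Y)
  exact ⟨B, A, f, g, h, hB, hA, hTr⟩
end

section
/- Let T be a triangulated category and let C1, C2 be strictly full triangulated subcategories of T such that Hom_T(X, Y) = 0 for every object X of C2 and every object Y of C1. Assume that for every object D of T there exists a distinguished triangle B ⟶ D ⟶ A ⟶ B⟦1⟧ with B in C2 and A in C1. Then the inclusion functor of C1 into T admits a left adjoint, and C2 consists exactly of the objects D of T with Hom_T(D, Y) = 0 for all objects Y of C1. -/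
/-!
The triangle `B ⟶ D ⟶ A ⟶ B⟦1⟧` exhibits `D ⟶ A` as a morphism whose cone `B⟦1⟧` lies in `C₂`,
i.e. a morphism of `C₂.trW`. Objects of `C₁` lie in the right orthogonal of the triangulated
subcategory `C₂`, which is exactly the class of `C₂.trW`-local objects, so `D ⟶ A` is a reflection
of `D` into `C₁`. If `D` is left orthogonal to `C₁`, this reflection is a zero morphism into a
local object, which forces `A = 0`; then `B ≅ D` and `D` lies in `C₂`.
-/

open CategoryTheory Category Limits Pretriangulated

universe v u

variable (T : Type u) [Category.{v} T] [HasZeroObject T] [HasShift T ℤ]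
  [Preadditive T] [∀ n : ℤ, (shiftFunctor T n).Additive] [Pretriangulated T]

namespace CategoryTheory

lemma MorphismProperty.isZero_of_isLocal {C : Type*} [Category C] [HasZeroMorphisms C]
    {W : MorphismProperty C} {X A : C} {g : X ⟶ A} (hg : W g) (hA : W.isLocal A) (hg₀ : g = 0) :
    IsZero A :=
  (IsZero.iff_id_eq_zero A).2 ((hA g hg).injective (by simp [hg₀]))

namespace ObjectProperty

lemma isRightAdjoint_ι_of_isLocal {C : Type*} [Category C] {W : MorphismProperty C}
    {Q : ObjectProperty C} (hQ : Q ≤ W.isLocal) (h : ∀ X : C, ∃ (A : C) (g : X ⟶ A), W g ∧ Q A) :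
    Q.ι.IsRightAdjoint := by
  refine Functor.isRightAdjoint_of_leftAdjointObjIsDefined_eq_top (top_unique fun X _ => ?_)
  obtain ⟨A, g, hg, hA⟩ := h X
  exact ⟨⟨A, hA⟩, ⟨{
    homEquiv {Y} := Q.fullyFaithfulι.homEquiv.trans (Equiv.ofBijective _ (hQ _ Y.2 g hg))
    homEquiv_comp := fun _ _ => by simp [Functor.FullyFaithful.homEquiv] }⟩⟩

section Pretriangulated

variable {C : Type*} [Category C] [HasZeroObject C] [HasShift C ℤ] [Preadditive C]
  [∀ n : ℤ, (shiftFunctor C n).Additive] [Pretriangulated C] {P Q : ObjectProperty C}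

lemma isRightAdjoint_ι_of_distTriang [P.IsTriangulated] (hPQ : Q ≤ P.rightOrthogonal)
    (htriang : ∀ X : C, ∃ (B A : C) (f : B ⟶ X) (g : X ⟶ A) (h : A ⟶ B⟦(1 : ℤ)⟧),
      P B ∧ Q A ∧ Triangle.mk f g h ∈ distTriang C) :
    Q.ι.IsRightAdjoint := by
  refine isRightAdjoint_ι_of_isLocal (W := P.trW) (P.isLocal_trW ▸ hPQ) fun X => ?_
  obtain ⟨B, A, f, g, h, hB, hA, hT⟩ := htriang X
  exact ⟨A, g, trW.mk' P hT hB, hA⟩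

lemma leftOrthogonal_le_of_distTriang [P.IsTriangulated] [P.IsClosedUnderIsomorphisms]
    (hPQ : Q ≤ P.rightOrthogonal)
    (htriang : ∀ X : C, ∃ (B A : C) (f : B ⟶ X) (g : X ⟶ A) (h : A ⟶ B⟦(1 : ℤ)⟧),
      P B ∧ Q A ∧ Triangle.mk f g h ∈ distTriang C) :
    Q.leftOrthogonal ≤ P := by
  intro X hX
  obtain ⟨B, A, f, g, h, hB, hA, hT⟩ := htriang X
  have hA₀ : IsZero A := MorphismProperty.isZero_of_isLocal (trW.mk' P hT hB)
    (P.isLocal_trW ▸ hPQ _ hA) (hX g hA)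
  have : IsIso f := (Triangle.isZero₃_iff_isIso₁ _ hT).1 hA₀
  exact P.prop_of_iso (asIso f) hB

end Pretriangulated

end ObjectProperty

end CategoryTheory

variable {T} in
lemma IsTriangulatedSubcategory.isClosedUnderIsomorphisms {P : ObjectProperty T}
    (hP : IsTriangulatedSubcategory T P) : P.IsClosedUnderIsomorphisms :=
  ⟨fun e h => hP.isoClosed e h⟩

variable {T} in
lemma IsTriangulatedSubcategory.isTriangulated {P : ObjectProperty T}
    (hP : IsTriangulatedSubcategory T P) : P.IsTriangulated :=
  have := hP.isClosedUnderIsomorphisms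
  { exists_zero := HasZeroObject.zero.imp fun Z hZ => ⟨hZ, hP.zero Z hZ⟩
    isStableUnderShiftBy := fun n => ⟨fun X hX => hP.shift X n hX⟩
    toIsTriangulatedClosed₂ := .mk' hP.ext₂ }

theorem decomposition_triangles_give_left_adjoint
    (C1 C2 : T → Prop)
    (hC2 : IsTriangulatedSubcategory T C2)
    (hHom : ∀ (X Y : T), C2 X → C1 Y → ∀ f : X ⟶ Y, f = 0)
    (htriang : ∀ D : T, ∃ (B A : T) (f : B ⟶ D) (g : D ⟶ A) (h : A ⟶ B⟦(1 : ℤ)⟧),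
      C2 B ∧ C1 A ∧ (Triangle.mk f g h ∈ distTriang T)) :
    (ObjectProperty.ι C1).IsRightAdjoint ∧
      (∀ D : T, C2 D ↔ ∀ Y : T, C1 Y → ∀ f : D ⟶ Y, f = 0) := by
  have := hC2.isClosedUnderIsomorphisms
  have := hC2.isTriangulated
  have hC1_le : C1 ≤ ObjectProperty.rightOrthogonal C2 := fun Y hY X f hX => hHom X Y hX hY f
  refine ⟨ObjectProperty.isRightAdjoint_ι_of_distTriang hC1_le htriang, fun D => ⟨?_, ?_⟩⟩
  · exact fun hD Y hY f => hHom D Y hD hY f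
  · exact fun hD => ObjectProperty.leftOrthogonal_le_of_distTriang hC1_le htriang D
      fun Y f hY => hD Y hY f
end

section
/- Let T be a triangulated category and let C1, C2 be strictly full triangulated subcategories of T such that Hom_T(X, Y) = 0 for every object X of C2 and every object Y of C1. Assume that for every object D of T there exists a distinguished triangle B ⟶ D ⟶ A ⟶ B⟦1⟧ with B in C2 and A in C1. Then the inclusion functor of C2 into T admits a right adjoint, and C1 consists exactly of the objects D of T with Hom_T(X, D) = 0 for all objects X of C2. -/
/-!
For every `D`, the triangle `B ⟶ D ⟶ A ⟶ B⟦1⟧` exhibits `B` as the coreflection of `D` into `C2`: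
for `X ∈ C2` both `Hom(X, A)` and `Hom(X, A⟦-1⟧)` vanish, so by the long exact `Hom(X, -)`
sequence composition with `B ⟶ D` is a bijection `Hom(X, B) ≃ Hom(X, D)`. If moreover `D` is right
orthogonal to `C2`, then `B ⟶ D` is zero, injectivity for `X = B` forces `B = 0`, and `D ≅ A`.
-/

open CategoryTheory Category Limits Pretriangulated

universe v u

variable (T : Type u) [Category.{v} T] [HasZeroObject T] [HasShift T ℤ]
  [Preadditive T] [∀ n : ℤ, (shiftFunctor T n).Additive] [Pretriangulated T]

namespace CategoryTheory

variable {C : Type*} [Category C]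

lemma ObjectProperty.isLeftAdjoint_ι_of_bijective (P : ObjectProperty C) (G : C → C)
    (hG : ∀ D, P (G D)) (ε : ∀ D, G D ⟶ D)
    (hε : ∀ X D, P X → Function.Bijective (fun ψ : X ⟶ G D ↦ ψ ≫ ε D)) :
    P.ι.IsLeftAdjoint := by
  let e (X : P.FullSubcategory) (D : C) : (P.ι.obj X ⟶ D) ≃ (X ⟶ ⟨G D, hG D⟩) :=
    (Equiv.ofBijective (fun ψ ↦ P.ι.map ψ ≫ ε D)
      ((hε X.obj D X.property).comp (P.fullyFaithfulι.map_bijective X ⟨G D, hG D⟩))).symm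
  refine (Adjunction.adjunctionOfEquivRight e fun X' X D φ ψ ↦ ?_).isLeftAdjoint
  rw [Equiv.symm_apply_eq]
  change _ = P.ι.map (φ ≫ e X D ψ) ≫ ε D
  rw [Functor.map_comp, assoc]
  exact congrArg (P.ι.map φ ≫ ·) ((e X D).symm_apply_apply ψ).symm

end CategoryTheory

namespace CategoryTheory.Pretriangulated

variable {C : Type*} [Category C] [HasZeroObject C] [HasShift C ℤ] [Preadditive C]
  [∀ n : ℤ, (shiftFunctor C n).Additive] [Pretriangulated C] {Tr : Triangle C} {X : C}

lemma comp_mor₁_injective (hTr : Tr ∈ distTriang C)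
    (h : ∀ φ : X ⟶ Tr.obj₃⟦(-1 : ℤ)⟧, φ = 0) :
    Function.Injective (fun ψ : X ⟶ Tr.obj₁ ↦ ψ ≫ Tr.mor₁) := by
  refine (injective_iff_map_eq_zero (Preadditive.rightComp X Tr.mor₁)).2 fun ψ hψ ↦ ?_
  obtain ⟨φ, rfl⟩ := Triangle.coyoneda_exact₂ _ (inv_rot_of_distTriang _ hTr) ψ hψ
  exact (congrArg (· ≫ Tr.invRotate.mor₁) (h φ)).trans zero_comp

lemma comp_mor₁_surjective (hTr : Tr ∈ distTriang C) (h : ∀ φ : X ⟶ Tr.obj₃, φ = 0) :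
    Function.Surjective (fun ψ : X ⟶ Tr.obj₁ ↦ ψ ≫ Tr.mor₁) := fun φ ↦
  (Triangle.coyoneda_exact₂ _ hTr φ (h _)).imp fun _ ↦ Eq.symm

lemma isIso_mor₂_of_mor₁_eq_zero (hTr : Tr ∈ distTriang C) (h₁ : Tr.mor₁ = 0)
    (h : ∀ φ : Tr.obj₁ ⟶ Tr.obj₃⟦(-1 : ℤ)⟧, φ = 0) : IsIso Tr.mor₂ := by
  refine (Tr.isZero₁_iff_isIso₂ hTr).1 ((IsZero.iff_id_eq_zero _).2 ?_)
  exact comp_mor₁_injective hTr h (by simp only [h₁, comp_zero])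

end CategoryTheory.Pretriangulated

theorem decomposition_triangles_give_right_adjoint
    (C1 C2 : T → Prop)
    (hC1 : IsTriangulatedSubcategory T C1)
    (hHom : ∀ (X Y : T), C2 X → C1 Y → ∀ f : X ⟶ Y, f = 0)
    (htriang : ∀ D : T, ∃ (B A : T) (f : B ⟶ D) (g : D ⟶ A) (h : A ⟶ B⟦(1 : ℤ)⟧),
      C2 B ∧ C1 A ∧ (Triangle.mk f g h ∈ distTriang T)) :
    (ObjectProperty.ι C2).IsLeftAdjoint ∧
      (∀ D : T, C1 D ↔ ∀ X : T, C2 X → ∀ f : X ⟶ D, f = 0) := by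
  choose B A f g h hB hA hdist using htriang
  have hA' (D : T) : C1 ((A D)⟦(-1 : ℤ)⟧) := hC1.shift _ _ (hA D)
  refine ⟨ObjectProperty.isLeftAdjoint_ι_of_bijective C2 B hB f fun X D hX ↦
      ⟨comp_mor₁_injective (hdist D) (hHom _ _ hX (hA' D)),
        comp_mor₁_surjective (hdist D) (hHom _ _ hX (hA D))⟩,
    fun D ↦ ⟨fun hD X hX ↦ hHom X D hX hD, fun hD ↦ ?_⟩⟩
  have : IsIso (g D) :=
    isIso_mor₂_of_mor₁_eq_zero (hdist D) (hD _ (hB D) _) (hHom _ _ (hB D) (hA' D))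
  exact hC1.isoClosed (asIso (g D)).symm (hA D)
end

section
/- Let T be a triangulated category and let C1, C2 be strictly full triangulated subcategories of T such that Hom_T(X, Y) = 0 for every object X of C2 and every object Y of C1. If the inclusion functor of C1 into T admits a left adjoint and C2 consists exactly of the objects D of T with Hom_T(D, Y) = 0 for all objects Y of C1, then for every object D of T there exists a distinguished triangle B ⟶ D ⟶ A ⟶ B⟦1⟧ with B in C2 and A in C1. -/
/-!
The unit `η : D ⟶ A` of the reflection onto `C₁` is `C₁`-local: precomposition with `η` is
a bijection on maps into objects of `C₁`, and since `C₁` is stable under shifts, so is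
precomposition with `η⟦1⟧'`. Completing `η` to a distinguished triangle `D ⟶ A ⟶ Z ⟶ D⟦1⟧`,
the long exact `Hom(-, W)` sequence then shows that every map from `Z` to `C₁` vanishes,
so `Z⟦-1⟧` lies in the left orthogonal `C₂`, and rotating the triangle gives the decomposition.
-/

open CategoryTheory Category Limits Pretriangulated

universe v u

variable (T : Type u) [Category.{v} T] [HasZeroObject T] [HasShift T ℤ]
  [Preadditive T] [∀ n : ℤ, (shiftFunctor T n).Additive] [Pretriangulated T]

namespace CategoryTheory.ObjectProperty

variable {C : Type*} [Category C] (P : ObjectProperty C)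

lemma isLocal_adj_unit_app_of_ι {L : C ⥤ P.FullSubcategory} (adj : L ⊣ P.ι) (X : C) :
    P.isLocal (adj.unit.app X) :=
  fun W hW ↦ isLocal_adj_unit_app adj X W ⟨⟨W, hW⟩, rfl⟩

lemma isLocal_shift_map [HasShift C ℤ] [P.IsStableUnderShift ℤ] {X Y : C} {f : X ⟶ Y}
    (hf : P.isLocal f) (n : ℤ) : P.isLocal (f⟦n⟧') := by
  intro W hW
  let adj := (shiftEquiv C n).toAdjunction
  have hconj : adj.homEquiv X W ∘ (fun g ↦ f⟦n⟧' ≫ g) =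
      (fun g ↦ f ≫ g) ∘ adj.homEquiv Y W :=
    funext fun g ↦ adj.homEquiv_naturality_left f g
  have hbij := (Equiv.bijective_comp (adj.homEquiv Y W) _).2 (hf _ (P.le_shift (-n) W hW))
  rw [← hconj] at hbij
  exact (Equiv.comp_bijective _ _).1 hbij

lemma leftOrthogonal_obj₃_of_isLocal_mor₁ [HasZeroObject C] [HasShift C ℤ] [Preadditive C]
    [∀ n : ℤ, (shiftFunctor C n).Additive] [Pretriangulated C] [P.IsStableUnderShift ℤ]
    (Tr : Triangle C) (hTr : Tr ∈ distTriang C) (hloc : P.isLocal Tr.mor₁) :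
    P.leftOrthogonal Tr.obj₃ := by
  intro W u hW
  have hu : Tr.mor₂ ≫ u = 0 :=
    (hloc W hW).1 (by simp [comp_distTriang_mor_zero₁₂_assoc _ hTr])
  obtain ⟨v, rfl⟩ := Triangle.yoneda_exact₃ Tr hTr u hu
  obtain ⟨w, rfl⟩ := (P.isLocal_shift_map hloc 1 W hW).2 v
  simp [comp_distTriang_mor_zero₃₁_assoc _ hTr]

end CategoryTheory.ObjectProperty

variable {T} in
lemma IsTriangulatedSubcategory.isStableUnderShift {P : ObjectProperty T}
    (hP : IsTriangulatedSubcategory T P) : P.IsStableUnderShift ℤ where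
  isStableUnderShiftBy n := ⟨fun X hX ↦ hP.shift X n hX⟩

theorem left_adjoint_gives_decomposition_triangles
    (C1 C2 : T → Prop)
    (hC1 : IsTriangulatedSubcategory T C1)
    (hadj : (ObjectProperty.ι C1).IsRightAdjoint)
    (hperp : ∀ D : T, C2 D ↔ ∀ Y : T, C1 Y → ∀ f : D ⟶ Y, f = 0) :
    ∀ D : T, ∃ (B A : T) (f : B ⟶ D) (g : D ⟶ A) (h : A ⟶ B⟦(1 : ℤ)⟧),
      C2 B ∧ C1 A ∧ (Triangle.mk f g h ∈ distTriang T) := by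
  intro D
  have := hC1.isStableUnderShift
  let adj := Adjunction.ofIsRightAdjoint (ObjectProperty.ι C1)
  obtain ⟨Z, g, h, hTr⟩ := distinguished_cocone_triangle (adj.unit.app D)
  have hZ : ObjectProperty.leftOrthogonal C1 Z :=
    ObjectProperty.leftOrthogonal_obj₃_of_isLocal_mor₁ C1 _ hTr
      (ObjectProperty.isLocal_adj_unit_app_of_ι C1 adj D)
  have hB : C2 (Z⟦(-1 : ℤ)⟧) :=
    (hperp _).2 fun Y hY f ↦ (ObjectProperty.leftOrthogonal C1).le_shift (-1) Z hZ f hY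
  exact ⟨_, _, _, _, _, hB, ((ObjectProperty.ι C1).leftAdjoint.obj D).property,
    inv_rot_of_distTriang _ hTr⟩
end

section
/- Let T be a triangulated category and let C1, C2 be strictly full triangulated subcategories of T such that Hom_T(X, Y) = 0 for every object X of C2 and every object Y of C1. If the inclusion functor of C2 into T admits a right adjoint and C1 consists exactly of the objects D of T with Hom_T(X, D) = 0 for all objects X of C2, then for every object D of T there exists a distinguished triangle B ⟶ D ⟶ A ⟶ B⟦1⟧ with B in C2 and A in C1. -/
open CategoryTheory Category Limits Pretriangulated

universe v u

variable (T : Type u) [Category.{v} T] [HasZeroObject T] [HasShift T ℤ]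
  [Preadditive T] [∀ n : ℤ, (shiftFunctor T n).Additive] [Pretriangulated T]

/-!
Let `G` be the right adjoint of the inclusion of `C₂` and complete the counit `B := G D ⟶ D`
to a distinguished triangle `B ⟶ D ⟶ A ⟶ B⟦1⟧`. Composition with the counit identifies
`Hom(X, B)` with `Hom(X, D)` for every `X ∈ C₂`; since `C₂` is closed under `⟦-1⟧`, the same holds
for `X⟦-1⟧`, hence `Hom(X, B⟦1⟧) → Hom(X, D⟦1⟧)` is injective. The long exact sequence of
`Hom(X, -)` then forces `Hom(X, A) = 0`, i.e. `A` lies in the right orthogonal `C₁`.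
-/

namespace CategoryTheory

lemma Adjunction.injective_comp_map {C D : Type*} [Category C] [Category D]
    {F : C ⥤ D} {G : D ⥤ C} (adj : F ⊣ G) {X : C} {B B' : D} (f : B ⟶ B')
    (hf : Function.Injective fun v : F.obj X ⟶ B => v ≫ f) :
    Function.Injective fun u : X ⟶ G.obj B => u ≫ G.map f := by
  intro u₁ u₂ h
  apply (adj.homEquiv X B).symm.injective
  apply hf
  simpa only [← Adjunction.homEquiv_naturality_right_symm] using
    congrArg (adj.homEquiv X B').symm h

lemma ObjectProperty.bijective_comp_counit_of_ι_adjunction {C : Type*} [Category C]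
    {P : ObjectProperty C} {G : C ⥤ P.FullSubcategory} (adj : P.ι ⊣ G) {X : C} (hX : P X)
    (D : C) : Function.Bijective fun g : X ⟶ (G.obj D).obj => g ≫ adj.counit.app D := by
  let e : (X ⟶ (G.obj D).obj) ≃ (X ⟶ D) :=
    (InducedCategory.homEquiv (X := (⟨X, hX⟩ : P.FullSubcategory))).symm.trans
      (adj.homEquiv _ D).symm
  have he : ⇑e = fun g => g ≫ adj.counit.app D := funext fun g => by
    simp only [e, Equiv.trans_apply, Adjunction.homEquiv_counit]
    rfl
  exact he ▸ e.bijective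

variable {C : Type*} [Category C] [HasZeroObject C] [HasShift C ℤ] [Preadditive C]
  [∀ n : ℤ, (shiftFunctor C n).Additive] [Pretriangulated C]

lemma Pretriangulated.rightOrthogonal_obj₃_of_bijective_comp_mor₁ (P : ObjectProperty C)
    (hP : ∀ X, P X → P (X⟦(-1 : ℤ)⟧)) (Tr : Triangle C) (hT : Tr ∈ distTriang C)
    (hbij : ∀ X, P X → Function.Bijective fun g : X ⟶ Tr.obj₁ => g ≫ Tr.mor₁) :
    P.rightOrthogonal Tr.obj₃ := by
  intro X φ hX
  have hinj : Function.Injective fun u : X ⟶ Tr.obj₁⟦(1 : ℤ)⟧ => u ≫ Tr.mor₁⟦(1 : ℤ)⟧' :=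
    (shiftEquiv' C (-1) 1 (by norm_num)).toAdjunction.injective_comp_map Tr.mor₁
      (hbij _ (hP X hX)).1
  have hφ : φ ≫ Tr.mor₃ = 0 :=
    hinj (by simp only [assoc, comp_distTriang_mor_zero₃₁ _ hT, comp_zero, zero_comp])
  obtain ⟨ψ, rfl⟩ := Tr.coyoneda_exact₃ hT φ hφ
  obtain ⟨χ, rfl⟩ := (hbij X hX).2 ψ
  simp only [assoc, comp_distTriang_mor_zero₁₂ _ hT, comp_zero]

end CategoryTheory

theorem right_adjoint_gives_decomposition_triangles
    (C1 C2 : T → Prop)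
    (hC2 : IsTriangulatedSubcategory T C2)
    (hadj : (ObjectProperty.ι C2).IsLeftAdjoint)
    (hperp : ∀ D : T, C1 D ↔ ∀ X : T, C2 X → ∀ f : X ⟶ D, f = 0) :
    ∀ D : T, ∃ (B A : T) (f : B ⟶ D) (g : D ⟶ A) (h : A ⟶ B⟦(1 : ℤ)⟧),
      C2 B ∧ C1 A ∧ (Triangle.mk f g h ∈ distTriang T) := by
  intro D
  obtain ⟨G, ⟨adj⟩⟩ := hadj
  obtain ⟨A, g, h, hT⟩ := distinguished_cocone_triangle (adj.counit.app D)
  have hA : ObjectProperty.rightOrthogonal C2 A :=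
    rightOrthogonal_obj₃_of_bijective_comp_mor₁ C2 (fun X hX => hC2.shift X (-1) hX) _ hT
      fun X hX => ObjectProperty.bijective_comp_counit_of_ι_adjunction adj hX D
  exact ⟨_, A, _, g, h, (G.obj D).property, (hperp A).2 fun X hX f => hA f hX, hT⟩
end

section
/- Let T be a triangulated category, let A1, A2, B be objects of T, and let f1 : A1 ⟶ B and f2 : A2 ⟶ B be morphisms. Suppose given distinguished triangles A1 ⟶f1 B ⟶b1 C1 ⟶a1 A1⟦1⟧, A1 ⊞ A2 ⟶(f1,f2) B ⟶ C ⟶ (A1 ⊞ A2)⟦1⟧ (where (f1,f2) : A1 ⊞ A2 ⟶ B is the morphism out of the biproduct with components f1 and f2), and A2 ⟶(f2 ≫ b1) C1 ⟶ C' ⟶ A2⟦1⟧. Then A1⟦1⟧ ⊞ C is isomorphic to A1⟦1⟧ ⊞ C'. -/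
open CategoryTheory Category Limits Pretriangulated

universe v u

variable (T : Type u) [Category.{v} T] [HasZeroObject T] [HasShift T ℤ]
  [Preadditive T] [∀ n : ℤ, (shiftFunctor T n).Additive] [Pretriangulated T]
  [HasBinaryBiproducts T]

/-! Both `A1⟦1⟧ ⊞ C` and `A1⟦1⟧ ⊞ C'` are isomorphic to a cone `Z` of
`(f1, f2) ≫ b1 : A1 ⊞ A2 ⟶ C1`. This composite factors as `(f1, f2)` followed by `b1`, and,
since `f1 ≫ b1 = 0`, also as the projection onto `A2` followed by `f2 ≫ b1`. The octahedron of
each factorization gives a distinguished triangle `C ⟶ Z ⟶ A1⟦1⟧ ⟶ C⟦1⟧`, resp.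
`A1⟦1⟧ ⟶ Z ⟶ C' ⟶ A1⟦2⟧`, whose third morphism vanishes (because `f1 ≫ b = 0`, resp. because the
projection onto `A2` has cone `A1⟦1⟧` with zero map `A2 ⟶ A1⟦1⟧`), so both triangles split. -/

variable {T}

/-- `w₂₃ ≫ v₁₂⟦1⟧'` is the third morphism of the octahedral triangle `Z₁₂ ⟶ Z₁₃ ⟶ Z₂₃ ⟶ Z₁₂⟦1⟧`;
when it vanishes, that triangle splits. -/
lemma nonempty_iso_biprod_of_octahedron [IsTriangulated T] {X₁ X₂ X₃ Z₁₂ Z₂₃ Z₁₃ : T}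
    {u₁₂ : X₁ ⟶ X₂} {u₂₃ : X₂ ⟶ X₃} {u₁₃ : X₁ ⟶ X₃} (comm : u₁₂ ≫ u₂₃ = u₁₃)
    {v₁₂ : X₂ ⟶ Z₁₂} {w₁₂ : Z₁₂ ⟶ X₁⟦(1 : ℤ)⟧} (h₁₂ : Triangle.mk u₁₂ v₁₂ w₁₂ ∈ distTriang T)
    {v₂₃ : X₃ ⟶ Z₂₃} {w₂₃ : Z₂₃ ⟶ X₂⟦(1 : ℤ)⟧} (h₂₃ : Triangle.mk u₂₃ v₂₃ w₂₃ ∈ distTriang T)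
    {v₁₃ : X₃ ⟶ Z₁₃} {w₁₃ : Z₁₃ ⟶ X₁⟦(1 : ℤ)⟧} (h₁₃ : Triangle.mk u₁₃ v₁₃ w₁₃ ∈ distTriang T)
    (hw : w₂₃ ≫ v₁₂⟦(1 : ℤ)⟧' = 0) : Nonempty (Z₁₃ ≅ Z₁₂ ⊞ Z₂₃) :=
  ⟨(exists_iso_binaryBiproduct_of_distTriang _
    (Triangulated.someOctahedron comm h₁₂ h₂₃ h₁₃).mem hw).choose⟩

/-- Given morphisms `f1 : A1 ⟶ B`, `f2 : A2 ⟶ B`, a cone `C1` of `f1`, a cone `C` of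
`(f1, f2) : A1 ⊞ A2 ⟶ B`, and a cone `C'` of the composite `f2 ≫ b1 : A2 ⟶ C1`,
then `A1⟦1⟧ ⊞ C ≅ A1⟦1⟧ ⊞ C'`. -/
theorem biprod_cone_desc_reduction [IsTriangulated T]
    (A1 A2 B : T) (f1 : A1 ⟶ B) (f2 : A2 ⟶ B)
    (C1 : T) (b1 : B ⟶ C1) (a1 : C1 ⟶ A1⟦(1 : ℤ)⟧)
    (hT1 : Triangle.mk f1 b1 a1 ∈ distTriang T)
    (C : T) (b : B ⟶ C) (a : C ⟶ (A1 ⊞ A2)⟦(1 : ℤ)⟧)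
    (hT : Triangle.mk (biprod.desc f1 f2) b a ∈ distTriang T)
    (C' : T) (v : C1 ⟶ C') (w : C' ⟶ A2⟦(1 : ℤ)⟧)
    (hT' : Triangle.mk (f2 ≫ b1) v w ∈ distTriang T) :
    Nonempty ((A1⟦(1 : ℤ)⟧ ⊞ C) ≅ (A1⟦(1 : ℤ)⟧ ⊞ C')) := by
  obtain ⟨Z, _, _, hZ⟩ := distinguished_cocone_triangle (biprod.desc f1 f2 ≫ b1)
  have hdesc : biprod.desc f1 f2 ≫ b = 0 := comp_distTriang_mor_zero₁₂ _ hT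
  have hf1b : f1 ≫ b = 0 := by simpa using biprod.inl ≫= hdesc
  have hf1b1 : f1 ≫ b1 = 0 := comp_distTriang_mor_zero₁₂ _ hT1
  have hcomm : biprod.snd ≫ f2 ≫ b1 = biprod.desc f1 f2 ≫ b1 := by
    ext <;> simp [hf1b1]
  have hT1' : Triangle.mk b1 a1 (-f1⟦(1 : ℤ)⟧') ∈ distTriang T := rot_of_distTriang _ hT1
  have hsnd : Triangle.mk (biprod.snd : A1 ⊞ A2 ⟶ A2) 0 (-biprod.inl⟦(1 : ℤ)⟧') ∈ distTriang T :=
    rot_of_distTriang _ (binaryBiproductTriangle_distinguished A1 A2)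
  obtain ⟨eC⟩ := nonempty_iso_biprod_of_octahedron rfl hT hT1' hZ
    (by simp [← Functor.map_comp, hf1b])
  obtain ⟨eC'⟩ := nonempty_iso_biprod_of_octahedron hcomm hsnd hT' hZ (by simp)
  exact ⟨biprod.braiding _ _ ≪≫ eC.symm ≪≫ eC'⟩
end

section
/- Let T be a triangulated category and let C be a class of objects of T that is closed under extensions (if X ⟶ Y ⟶ Z ⟶ X⟦1⟧ is a distinguished triangle with X and Z in C, then Y is in C) and closed under direct summands (if Y ⊞ Z is in C then Y and Z are in C). Let (X_n)_{n ≥ 0} be a sequence of objects of T with X_0 = 0, and suppose that for every n ≥ 1 there is a distinguished triangle X_n ⟶ X_{n-1} ⊞ X_{n+1} ⟶ X_n ⟶ X_n⟦1⟧. Then X_n belongs to C for some n ≥ 1 if and only if X_n belongs to C for every n ≥ 1. -/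
open CategoryTheory Category Limits Pretriangulated

universe v u

variable (T : Type u) [Category.{v} T] [HasZeroObject T] [HasShift T ℤ]
  [Preadditive T] [∀ n : ℤ, (shiftFunctor T n).Additive] [Pretriangulated T]
  [HasBinaryBiproducts T]

/-- Let `C` be a class of objects closed under extensions and under direct summands, and
let `(X n)` be a sequence of objects with `X 0 = 0` such that for each `n ≥ 1` there is
a distinguished triangle `X n ⟶ X (n-1) ⊞ X (n+1) ⟶ X n ⟶ (X n)⟦1⟧`. Then some `X n`
(`n ≥ 1`) lies in `C` if and only if all `X n` (`n ≥ 1`) lie in `C`. -/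
theorem band_objects_all_or_nothing [IsTriangulated T]
    (C : T → Prop)
    (hext : ∀ Tr : Triangle T, (Tr ∈ distTriang T) → C Tr.obj₁ → C Tr.obj₃ → C Tr.obj₂)
    (hsum : ∀ Y Z : T, C (Y ⊞ Z) → C Y ∧ C Z)
    (X : ℕ → T) (hX0 : IsZero (X 0))
    (htri : ∀ n : ℕ, ∃ (f : X (n + 1) ⟶ X n ⊞ X (n + 2))
      (g : X n ⊞ X (n + 2) ⟶ X (n + 1)) (h : X (n + 1) ⟶ (X (n + 1))⟦(1 : ℤ)⟧),
      Triangle.mk f g h ∈ distTriang T) :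
    (∃ n : ℕ, C (X (n + 1))) ↔ (∀ n : ℕ, C (X (n + 1))) := by
  have key : ∀ n : ℕ, C (X (n + 1)) → C (X n) ∧ C (X (n + 2)) := by
    intro n hc
    obtain ⟨f, g, h, hT⟩ := htri n
    exact hsum _ _ (hext _ hT hc hc)
  constructor
  · rintro ⟨n, hn⟩ m
    have up : ∀ k : ℕ, C (X (n + 1 + k)) := by
      intro k
      induction k with
      | zero => exact hn
      | succ k ih =>
        rw [show n + 1 + (k + 1) = (n + k) + 2 from by omega]
        exact (key (n + k) (by rw [show n + k + 1 = n + 1 + k from by omega]; exact ih)).2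
    have down : ∀ k : ℕ, C (X (k + 1)) → ∀ j ≤ k, C (X (j + 1)) := by
      intro k
      induction k with
      | zero =>
        intro h j hj
        have : j = 0 := Nat.le_zero.mp hj
        subst this; exact h
      | succ k ih =>
        intro h j hj
        rcases Nat.lt_or_ge j (k + 1) with hj' | hj'
        · exact ih ((key (k + 1) h).1) j (by omega)
        · have : j = k + 1 := by omega
          subst this; exact h
    rcases le_or_gt m n with hm | hm
    · exact down n hn m hm
    · rw [show m + 1 = n + 1 + (m - n) from by omega]
      exact up (m - n)
  · intro h
    exact ⟨0, h 0⟩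
end
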